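/- For every real r > 0 and real β > 0, (h(r)·(1 + β) - r)/β ≤ (1 + β - √(1 + 2β))/(2β), where h(r) = (2r + 1 - √(4r² + 1))/2. In other words, r = β/(2√(1+2β)) maximizes (h(r)·(1+β) - r)/β over r > 0. -/
import Mathlib


theorem stmt_6 (r β : ℝ) (hr : 0 < r) (hβ : 0 < β) :
    ((2*r + 1 - Real.sqrt (4*r^2 + 1)) / 2 * (1 + β) - r) / β ≤
      (1 + β - Real.sqrt (1 + 2*β)) / (2*β) := by
  set s := Real.sqrt (1 + 2*β) with hs
  set t := Real.sqrt (4*r^2 + 1) with ht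
  have hs0 : 0 ≤ s := Real.sqrt_nonneg _
  have ht0 : 0 ≤ t := Real.sqrt_nonneg _
  have hs2 : s^2 = 1 + 2*β := Real.sq_sqrt (by nlinarith)
  have ht2 : t^2 = 4*r^2 + 1 := Real.sq_sqrt (by nlinarith)
  have key : 2*r*β + s ≤ (1+β)*t := by
    have h4 : 4*r^2*s^2 = 4*r^2*(1+2*β) := by rw [hs2]
    have hsq : (2*r*β + s)^2 ≤ ((1+β)*t)^2 := by nlinarith [sq_nonneg (2*r*s - β), h4]
    have h1 : 0 ≤ 2*r*β + s := by positivity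
    have h2 : 0 ≤ (1+β)*t := by positivity
    nlinarith [sq_nonneg ((1+β)*t - (2*r*β + s))]
  rw [div_le_div_iff₀ hβ (by linarith)]
  nlinarith [key]
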